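/- Let t be an n-ary idempotent polymorphism of the digraph D. Then the major subsets for t form a filter of the lattice of subsets of {1,…,n}: the full set {1,…,n} is major, every superset of a major subset is major, and the intersection of two major subsets is major. -/

import Mathlib

/-!
In `D` the only vertex `x` with `2 → x → 2` is `2` itself, so whenever `t a = t b = 2` and
`a → e → b` coordinatewise, also `t e = 2`. Squeezing tuples this way, any witness of a major
set `I` can be replaced by its `{0,2}`-valued indicator `χ_I`. For `I ⊆ J` the tuple that is
`2` on `I` and `1` on `J \ I` lies between `χ_I` and itself, and `χ_J` lies between that tuple
and `χ_I`; the tuple that is `2` on `I ∩ J` and `1` on `J \ I` lies between `χ_I` and `χ_J`.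
-/

namespace DigraphHM12

/-- `f` is a polymorphism of the digraph `(V, E)`. -/
def IsPoly {V : Type*} (E : V → V → Prop) {n : ℕ} (f : (Fin n → V) → V) : Prop :=
  ∀ a b : Fin n → V, (∀ i, E (a i) (b i)) → E (f a) (f b)

/-- `f` is idempotent. -/
def IsIdem {V : Type*} {n : ℕ} (f : (Fin n → V) → V) : Prop :=
  ∀ x : V, f (fun _ => x) = x

/-- The reflexive digraph `D` on `{0,1,2}` with non-loop edges
`0 → 1`, `1 → 0`, `1 → 2`, `2 → 0`. -/
def DEdge : Fin 3 → Fin 3 → Prop := fun a b =>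
  a = b ∨ (a = 0 ∧ b = 1) ∨ (a = 1 ∧ b = 0) ∨ (a = 1 ∧ b = 2) ∨ (a = 2 ∧ b = 0)

/-- `I` is a major subset for `t`: there is a tuple `c` with `t(c) = 2` whose set of
coordinates equal to `2` is exactly `I`. -/
def IsMajor {n : ℕ} (t : (Fin n → Fin 3) → Fin 3) (I : Finset (Fin n)) : Prop :=
  ∃ c : Fin n → Fin 3, t c = 2 ∧ I = Finset.univ.filter (fun i => c i = 2)

open Finset

instance : DecidableRel DEdge := fun a b => by unfold DEdge; infer_instance

lemma eq_two_of_dEdge {x : Fin 3} (h₁ : DEdge 2 x) (h₂ : DEdge x 2) : x = 2 := by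
  revert x h₁ h₂; decide

section Polymorphism

variable {n : ℕ} {t : (Fin n → Fin 3) → Fin 3}

lemma apply_eq_two_of_between (hpoly : IsPoly DEdge t) {a b e : Fin n → Fin 3}
    (ha : t a = 2) (hb : t b = 2) (hae : ∀ i, DEdge (a i) (e i)) (heb : ∀ i, DEdge (e i) (b i)) :
    t e = 2 :=
  eq_two_of_dEdge (ha ▸ hpoly a e hae) (hb ▸ hpoly e b heb)

def layerTuple (I J : Finset (Fin n)) : Fin n → Fin 3 :=
  fun i => if i ∈ I then 2 else if i ∈ J then 1 else 0

lemma filter_layerTuple_eq_two (I J : Finset (Fin n)) :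
    univ.filter (fun i => layerTuple I J i = 2) = I := by
  ext i
  by_cases hI : i ∈ I <;> by_cases hJ : i ∈ J <;> simp [layerTuple, hI, hJ]

lemma isMajor_of_apply_layerTuple {I J : Finset (Fin n)} (h : t (layerTuple I J) = 2) :
    IsMajor t I :=
  ⟨_, h, (filter_layerTuple_eq_two I J).symm⟩

lemma apply_layerTuple_of_isMajor (hpoly : IsPoly DEdge t) {I : Finset (Fin n)}
    (hI : IsMajor t I) : t (layerTuple I ∅) = 2 := by
  obtain ⟨c, hc, rfl⟩ := hI
  have hsquash : ∀ x : Fin 3,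
      DEdge x (if x = 2 then 2 else 0) ∧ DEdge (if x = 2 then 2 else 0) x := by
    decide
  have hχ : layerTuple (univ.filter fun i => c i = 2) ∅ = fun i => if c i = 2 then 2 else 0 := by
    ext i
    simp [layerTuple]
  rw [hχ]
  exact apply_eq_two_of_between hpoly hc hc (fun i => (hsquash (c i)).1)
    (fun i => (hsquash (c i)).2)

lemma apply_layerTuple_of_subset (hpoly : IsPoly DEdge t) {I J : Finset (Fin n)}
    (hI : t (layerTuple I ∅) = 2) (hIJ : I ⊆ J) : t (layerTuple J ∅) = 2 := by
  have hmiddle : t (layerTuple I J) = 2 :=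
    apply_eq_two_of_between hpoly hI hI
      (fun i => by unfold layerTuple; split_ifs <;> decide)
      (fun i => by unfold layerTuple; split_ifs <;> decide)
  refine apply_eq_two_of_between hpoly hmiddle hI (fun i => ?_) (fun i => ?_) <;>
    unfold layerTuple <;> split_ifs <;> first | decide | simp_all [subset_iff]

lemma apply_layerTuple_inter (hpoly : IsPoly DEdge t) {I J : Finset (Fin n)}
    (hI : t (layerTuple I ∅) = 2) (hJ : t (layerTuple J ∅) = 2) :
    t (layerTuple (I ∩ J) J) = 2 :=
  apply_eq_two_of_between hpoly hI hJ
    (fun i => by unfold layerTuple; split_ifs <;> first | decide | simp_all)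
    (fun i => by unfold layerTuple; split_ifs <;> first | decide | simp_all)

end Polymorphism

/-- The major subsets for an idempotent polymorphism of `D` form a filter of the lattice
of subsets of `{1,…,n}`: the full set is major, supersets of major subsets are major,
and intersections of major subsets are major. -/
theorem majors_form_filter {n : ℕ}
    (t : (Fin n → Fin 3) → Fin 3) (hpoly : IsPoly DEdge t) (hidem : IsIdem t) :
    IsMajor t Finset.univ ∧
      (∀ I J : Finset (Fin n), IsMajor t I → I ⊆ J → IsMajor t J) ∧
      (∀ I J : Finset (Fin n), IsMajor t I → IsMajor t J → IsMajor t (I ∩ J)) := by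
  refine ⟨⟨fun _ => 2, hidem 2, by simp⟩, fun I J hI hIJ => ?_, fun I J hI hJ => ?_⟩
  · exact isMajor_of_apply_layerTuple
      (apply_layerTuple_of_subset hpoly (apply_layerTuple_of_isMajor hpoly hI) hIJ)
  · exact isMajor_of_apply_layerTuple
      (apply_layerTuple_inter hpoly (apply_layerTuple_of_isMajor hpoly hI)
        (apply_layerTuple_of_isMajor hpoly hJ))

end DigraphHM12
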